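/- arXiv:2210.10143 — 3 statements merged into one kernel-verified Lean document; each statement's English description precedes it below -/
import Mathlib

section
/- Let q ≥ 2, n ≥ 1, Q = ⌈log₂ q⌉, and let x, y ∈ ℤ_q^n. Write [x], [y] ∈ {0,1}^{nQ} for the little-endian binary encodings of the coordinates. Let θ₁,...,θ_n be real numbers and define r_{(i-1)Q+j} = 2^{j-1}θ_i for i ∈ [n], j ∈ [Q]. Consider the (nQ+1)-qubit state |ψ⟩ = (|[x]⟩⊗|1⟩ + |[y]⟩⊗|0⟩)/√2. If for each t ∈ [nQ] the t-th qubit is measured in the eigenbasis of (cos r_t)X + (sin r_t)Y, obtaining outcome (-1)^{u_t}, then the post-measurement state of the remaining qubit is (|0⟩ + e^{iθ}|1⟩)/√2 where θ = Σ_{i=1}^n (y_i - x_i)θ_i + π Σ_{i=1}^n Σ_{j=1}^Q ([y_i]_j - [x_i]_j) u_{(i-1)Q+j} (mod 2π). -/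
open Complex

theorem bitsum_nat (m Q : ℕ) :
    ∑ i ∈ Finset.range Q, (if m.testBit i then 2^i else 0) = m % 2^Q := by
  induction Q with
  | zero => simp [Nat.mod_one]
  | succ Q ih =>
    rw [Finset.sum_range_succ, ih, pow_succ, Nat.mod_mul]
    rw [Nat.testBit_eq_decide_div_mod_eq]
    rcases Nat.mod_two_eq_zero_or_one (m / 2^Q) with h | h <;> simp [h]

theorem bitsum_real (m Q : ℕ) (hm : m < 2^Q) :
    ∑ j : Fin Q, (if m.testBit (j:ℕ) then (1:ℝ) else 0) * 2^(j:ℕ) = m := by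
  have h := bitsum_nat m Q
  rw [Nat.mod_eq_of_lt hm] at h
  rw [Fin.sum_univ_eq_sum_range (fun j => (if m.testBit j then (1:ℝ) else 0) * 2^j)]
  calc ∑ j ∈ Finset.range Q, (if m.testBit j then (1:ℝ) else 0) * 2^j
      = ∑ j ∈ Finset.range Q, ((if m.testBit j then 2^j else 0 : ℕ) : ℝ) := by
        apply Finset.sum_congr rfl; intro j _; split <;> simp
    _ = m := by rw [← Nat.cast_sum, h]

/-- Component `⟨(-1)^u_r | b⟩` of the bra dual to the eigenvector
`|±_r⟩ = (|0⟩ ± e^{ir}|1⟩)/√2` of `(cos r)X + (sin r)Y`. -/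
noncomputable def braXY (u : Bool) (r : ℝ) (b : Bool) : ℂ :=
  (if b then (if u then -1 else 1) * Complex.exp (-(r : ℂ) * Complex.I) else 1) /
    (Real.sqrt 2 : ℝ)

theorem braXY_eq (u : Bool) (r : ℝ) (b : Bool) :
    braXY u r b = Complex.exp ((((if b then (1:ℝ) else 0) *
      ((if u then (1:ℝ) else 0) * Real.pi - r)) : ℝ) * Complex.I) / (Real.sqrt 2 : ℝ) := by
  unfold braXY
  cases b <;> cases u <;> push_cast <;> norm_num
  rw [show ((Real.pi :ℂ) - r) * I = Real.pi * I + (-r * I) by ring, Complex.exp_add,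
    Complex.exp_pi_mul_I]
  ring

theorem rotated_measurements_on_generalized_GHZ
    (q n Q : ℕ) (hq : 2 ≤ q) (hn : 1 ≤ n) (hQ : Q = Nat.clog 2 q)
    (x y : Fin n → Fin q) (θs : Fin n → ℝ) (u : Fin n × Fin Q → Bool)
    -- little-endian binary encodings of the coordinates of `x` and `y`
    (bx by' : Fin n × Fin Q → Bool)
    (hbx : ∀ t, bx t = (x t.1 : ℕ).testBit (t.2 : ℕ))
    (hby : ∀ t, by' t = (y t.1 : ℕ).testBit (t.2 : ℕ))
    -- the `(nQ+1)`-qubit state `|ψ⟩ = (|[x]⟩⊗|1⟩ + |[y]⟩⊗|0⟩)/√2`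
    (ψ : ((Fin n × Fin Q → Bool) × Bool) → ℂ)
    (hψ : ∀ z c, ψ (z, c) =
      ((if z = bx ∧ c = true then 1 else 0) +
        (if z = by' ∧ c = false then 1 else 0)) / (Real.sqrt 2 : ℝ))
    -- the measurement angles `r_{(i-1)Q + j} = 2^{j-1} θ_i`
    (r : Fin n × Fin Q → ℝ) (hr : ∀ t, r t = 2 ^ (t.2 : ℕ) * θs t.1)
    -- the unnormalized state of the last qubit after measuring qubit `t`
    -- in the eigenbasis of `(cos r_t)X + (sin r_t)Y` with outcome `(-1)^{u_t}`
    (post : Bool → ℂ)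
    (hpost : ∀ c, post c =
      ∑ z : Fin n × Fin Q → Bool, (∏ t, braXY (u t) (r t) (z t)) * ψ (z, c))
    (θ : ℝ)
    (hθ : θ = (∑ i, ((y i : ℝ) - (x i : ℝ)) * θs i) +
      Real.pi * ∑ i, ∑ j, (((if by' (i, j) then (1 : ℝ) else 0)
        - (if bx (i, j) then (1 : ℝ) else 0)) * (if u (i, j) then (1 : ℝ) else 0))) :
    ∃ μ : ℂ, μ ≠ 0 ∧ ∀ c : Bool,
      post c = μ * ((if c then Complex.exp (θ * Complex.I) else 1) /
        (Real.sqrt 2 : ℝ)) := by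
  set N := Fintype.card (Fin n × Fin Q) with hN
  set S : (Fin n × Fin Q → Bool) → ℝ := fun z =>
    ∑ t, (if z t then (1:ℝ) else 0) * ((if u t then (1:ℝ) else 0) * Real.pi - r t) with hS
  -- product formula
  have hprod : ∀ z : Fin n × Fin Q → Bool,
      (∏ t, braXY (u t) (r t) (z t)) =
        Complex.exp ((S z : ℝ) * I) / ((Real.sqrt 2 : ℝ) : ℂ)^N := by
    intro z
    simp only [braXY_eq, hS]
    rw [Finset.prod_div_distrib, ← Complex.exp_sum, Finset.prod_const,
      Finset.card_univ, Complex.ofReal_sum, Finset.sum_mul]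
  -- post values
  have hpt : post true = (∏ t, braXY (u t) (r t) (bx t)) / (Real.sqrt 2 : ℝ) := by
    rw [hpost, Finset.sum_eq_single bx]
    · rw [hψ]; norm_num [div_eq_mul_inv]
    · intro z _ hz; rw [hψ]; simp [hz]
    · intro h; exact absurd (Finset.mem_univ bx) h
  have hpf : post false = (∏ t, braXY (u t) (r t) (by' t)) / (Real.sqrt 2 : ℝ) := by
    rw [hpost, Finset.sum_eq_single by']
    · rw [hψ]; norm_num [div_eq_mul_inv]
    · intro z _ hz; rw [hψ]; simp [hz]
    · intro h; exact absurd (Finset.mem_univ by') h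
  -- binary encoding facts
  have hqle : q ≤ 2^Q := by rw [hQ]; exact Nat.le_pow_clog one_lt_two q
  have hx : ∀ i, ∑ j : Fin Q, (if bx (i,j) then (1:ℝ) else 0) * 2^(j:ℕ) = ((x i : ℕ) : ℝ) := by
    intro i
    simp only [hbx]
    exact bitsum_real _ _ (lt_of_lt_of_le (x i).2 hqle)
  have hy : ∀ i, ∑ j : Fin Q, (if by' (i,j) then (1:ℝ) else 0) * 2^(j:ℕ) = ((y i : ℕ) : ℝ) := by
    intro i
    simp only [hby]
    exact bitsum_real _ _ (lt_of_lt_of_le (y i).2 hqle)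
  -- the key real identity
  set Kr : ℝ := ∑ i, ∑ j, (((if by' (i, j) then (1 : ℝ) else 0)
        - (if bx (i, j) then (1 : ℝ) else 0)) * (if u (i, j) then (1 : ℝ) else 0)) with hKr
  set Pbx : Fin n → ℝ := fun i =>
    ∑ j : Fin Q, (if bx (i,j) then (1:ℝ) else 0) * (if u (i,j) then (1:ℝ) else 0) with hPbx
  set Pby : Fin n → ℝ := fun i =>
    ∑ j : Fin Q, (if by' (i,j) then (1:ℝ) else 0) * (if u (i,j) then (1:ℝ) else 0) with hPby
  have e1 : ∀ (w : Fin n × Fin Q → Bool) (i : Fin n),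
      ∑ j : Fin Q, (if w (i,j) then (1:ℝ) else 0) *
        ((if u (i,j) then (1:ℝ) else 0) * Real.pi - r (i,j))
      = Real.pi * (∑ j : Fin Q, (if w (i,j) then (1:ℝ) else 0) * (if u (i,j) then (1:ℝ) else 0))
        - θs i * (∑ j : Fin Q, (if w (i,j) then (1:ℝ) else 0) * 2^(j:ℕ)) := by
    intro w i
    rw [Finset.mul_sum, Finset.mul_sum, ← Finset.sum_sub_distrib]
    apply Finset.sum_congr rfl
    intro j _
    rw [hr]
    ring
  have hSx : S bx = Real.pi * (∑ i, Pbx i) - ∑ i, ((x i : ℕ) : ℝ) * θs i := by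
    rw [hS]
    simp only
    rw [Fintype.sum_prod_type, Finset.mul_sum, ← Finset.sum_sub_distrib]
    apply Finset.sum_congr rfl
    intro i _
    rw [e1 bx i, hx i, hPbx]
    ring
  have hSy : S by' = Real.pi * (∑ i, Pby i) - ∑ i, ((y i : ℕ) : ℝ) * θs i := by
    rw [hS]
    simp only
    rw [Fintype.sum_prod_type, Finset.mul_sum, ← Finset.sum_sub_distrib]
    apply Finset.sum_congr rfl
    intro i _
    rw [e1 by' i, hy i, hPby]
    ring
  have hKrval : Kr = (∑ i, Pby i) - ∑ i, Pbx i := by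
    rw [hKr, ← Finset.sum_sub_distrib]
    apply Finset.sum_congr rfl
    intro i _
    rw [hPbx, hPby]
    simp only
    rw [← Finset.sum_sub_distrib]
    apply Finset.sum_congr rfl
    intro j _
    ring
  have hsubθ : ∑ i, ((y i : ℝ) - (x i : ℝ)) * θs i
      = (∑ i, ((y i : ℕ) : ℝ) * θs i) - ∑ i, ((x i : ℕ) : ℝ) * θs i := by
    rw [← Finset.sum_sub_distrib]
    apply Finset.sum_congr rfl
    intro i _
    push_cast
    ring
  have hreal : S bx = S by' + θ - 2 * Real.pi * Kr := by
    rw [hSx, hSy, hθ, hKrval, hsubθ]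
    ring
  -- Kr is an integer
  set K : ℤ := ∑ i : Fin n, ∑ j : Fin Q, (((if by' (i, j) then (1 : ℤ) else 0)
        - (if bx (i, j) then (1 : ℤ) else 0)) * (if u (i, j) then (1 : ℤ) else 0)) with hK
  have hKcast : (K : ℝ) = Kr := by
    rw [hK, hKr]
    push_cast
    apply Finset.sum_congr rfl
    intro i _
    apply Finset.sum_congr rfl
    intro j _
    split <;> split <;> split <;> norm_num
  -- exponential identity
  have hexp : Complex.exp ((S bx : ℝ) * I) =
      Complex.exp ((S by' : ℝ) * I) * Complex.exp ((θ : ℝ) * I) := by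
    have harg : ((S bx : ℝ) : ℂ) * I =
        ((S by' : ℝ) : ℂ) * I + ((θ : ℝ) : ℂ) * I + ((-K : ℤ) : ℂ) * (2 * (Real.pi : ℂ) * I) := by
      rw [hreal, ← hKcast]
      push_cast
      ring
    rw [harg, Complex.exp_add, Complex.exp_add, Complex.exp_int_mul_two_pi_mul_I, mul_one]
  -- assemble
  have hs2 : ((Real.sqrt 2 : ℝ) : ℂ) ≠ 0 := by
    simp only [ne_eq, Complex.ofReal_eq_zero]
    positivity
  refine ⟨Complex.exp ((S by' : ℝ) * I) / ((Real.sqrt 2 : ℝ) : ℂ)^N,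
    div_ne_zero (Complex.exp_ne_zero _) (pow_ne_zero _ hs2), ?_⟩
  intro c
  cases c
  · rw [hpf, hprod]
    simp only [Bool.false_eq_true, if_false]
    rw [mul_one_div, div_div]
  · rw [hpt, hprod, hexp]
    simp only [if_true]
    rw [div_div, div_mul_div_comm]
end

section
/- Let A be an m×n matrix over ℤ_q and suppose that for every nonzero v ∈ ℤ_q^n we have ‖Av‖_∞ > 4τ (where ‖·‖_∞ on ℤ_q uses |x| = min{x, q-x}). Then for any y ∈ ℤ_q^m there is at most one pair (x, g) with x ∈ ℤ_q^n, g ∈ ℤ_q^m, ‖g‖_∞ ≤ τ, and y = Ax + g; moreover if y = Ax₀ + g₀ and y + v = Ax₁ + g₁ with ‖g₀‖_∞, ‖g₁‖_∞ ≤ τ and v = As + e with ‖e‖_∞ ≤ τ, then x₁ = x₀ + s. -/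
/-- `|x| = min {x, q - x}` for `x ∈ ℤ_q`. -/
def zmodAbs (q : ℕ) (x : ZMod q) [NeZero q] : ℕ := min x.val (q - x.val)

/-- The infinity norm `‖w‖_∞ = max_i |w_i|` of a vector over `ℤ_q`. -/
def zmodNormInf {k q : ℕ} [NeZero q] (w : Fin k → ZMod q) : ℕ :=
  Finset.univ.sup fun i => zmodAbs q (w i)

lemma zmodAbs_eq (q : ℕ) [NeZero q] (x : ZMod q) :
    zmodAbs q x = x.valMinAbs.natAbs := by
  rw [ZMod.valMinAbs_natAbs_eq_min, zmodAbs]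

lemma zmodAbs_add (q : ℕ) [NeZero q] (a b : ZMod q) :
    zmodAbs q (a + b) ≤ zmodAbs q a + zmodAbs q b := by
  simp only [zmodAbs_eq]
  exact (ZMod.natAbs_valMinAbs_add_le a b).trans (Int.natAbs_add_le _ _)

lemma zmodAbs_neg (q : ℕ) [NeZero q] (a : ZMod q) :
    zmodAbs q (-a) = zmodAbs q a := by
  simp only [zmodAbs_eq, ZMod.natAbs_valMinAbs_neg]

lemma zmodAbs_zero (q : ℕ) [NeZero q] : zmodAbs q (0 : ZMod q) = 0 := by
  simp [zmodAbs_eq]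

lemma zmodNormInf_add {k q : ℕ} [NeZero q] (w z : Fin k → ZMod q) :
    zmodNormInf (w + z) ≤ zmodNormInf w + zmodNormInf z := by
  apply Finset.sup_le
  intro i _
  calc zmodAbs q ((w + z) i) ≤ zmodAbs q (w i) + zmodAbs q (z i) := zmodAbs_add q _ _
    _ ≤ zmodNormInf w + zmodNormInf z :=
      Nat.add_le_add (Finset.le_sup (f := fun i => zmodAbs q (w i)) (Finset.mem_univ i))
        (Finset.le_sup (f := fun i => zmodAbs q (z i)) (Finset.mem_univ i))

lemma zmodNormInf_neg {k q : ℕ} [NeZero q] (w : Fin k → ZMod q) :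
    zmodNormInf (-w) = zmodNormInf w := by
  unfold zmodNormInf
  congr 1
  funext i
  exact zmodAbs_neg q (w i)

theorem claw_uniqueness
    (m n q τ : ℕ) [NeZero q]
    (A : Matrix (Fin m) (Fin n) (ZMod q))
    (hA : ∀ v : Fin n → ZMod q, v ≠ 0 → 4 * τ < zmodNormInf (A.mulVec v)) :
    (∀ (y : Fin m → ZMod q) (x x' : Fin n → ZMod q) (g g' : Fin m → ZMod q),
      zmodNormInf g ≤ τ → zmodNormInf g' ≤ τ →
      y = A.mulVec x + g → y = A.mulVec x' + g' → x = x' ∧ g = g') ∧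
    (∀ (s e v y : _) (x₀ g₀ x₁ g₁ : _),
      zmodNormInf e ≤ τ → zmodNormInf g₀ ≤ τ → zmodNormInf g₁ ≤ τ →
      v = A.mulVec s + e →
      y = A.mulVec x₀ + g₀ → y + v = A.mulVec x₁ + g₁ →
      x₁ = x₀ + s) := by
  constructor
  · intro y x x' g g' hg hg' h1 h2
    have hx : x = x' := by
      by_contra hne
      have hv : x - x' ≠ 0 := sub_ne_zero.mpr hne
      have key : A.mulVec (x - x') = g' + -g := by
        rw [Matrix.mulVec_sub, ← sub_eq_add_neg]
        have := h1.symm.trans h2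
        linear_combination this
      have hb : zmodNormInf (A.mulVec (x - x')) ≤ τ + τ := by
        rw [key]
        calc zmodNormInf (g' + -g) ≤ zmodNormInf g' + zmodNormInf (-g) := zmodNormInf_add _ _
          _ ≤ τ + τ := by rw [zmodNormInf_neg]; exact Nat.add_le_add hg' hg
      have := hA _ hv
      omega
    refine ⟨hx, ?_⟩
    subst hx
    have := h1.symm.trans h2
    exact (add_right_injective _ this)
  · intro s e v y x₀ g₀ x₁ g₁ he hg0 hg1 hv hy0 hy1
    by_contra hne
    have hvne : x₁ - x₀ - s ≠ 0 := by
      intro h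
      apply hne
      have : x₁ - (x₀ + s) = 0 := by rw [← h]; abel
      have := sub_eq_zero.mp this
      exact this
    have key : A.mulVec (x₁ - x₀ - s) = g₀ + e + -g₁ := by
      rw [Matrix.mulVec_sub, Matrix.mulVec_sub]
      have h1 : A.mulVec x₁ + g₁ = y + v := hy1.symm
      have h2 : A.mulVec x₀ + g₀ = y := hy0.symm
      have h3 : A.mulVec s + e = v := hv.symm
      linear_combination h1 - h2 - h3
    have hb : zmodNormInf (A.mulVec (x₁ - x₀ - s)) ≤ τ + τ + τ := by
      rw [key]
      calc zmodNormInf (g₀ + e + -g₁)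
          ≤ zmodNormInf (g₀ + e) + zmodNormInf (-g₁) := zmodNormInf_add _ _
        _ ≤ zmodNormInf g₀ + zmodNormInf e + zmodNormInf g₁ := by
            rw [zmodNormInf_neg]
            exact Nat.add_le_add_right (zmodNormInf_add _ _) _
        _ ≤ τ + τ + τ := by omega
    have := hA _ hvne
    omega
end

section
/- Let b, b', d, d' ∈ {0,1} be random bits with b, b' uniform. In any strategy of two players in the CHSH game where the players' outputs d (of the player receiving b) and d' (of the player receiving b') are determined by (possibly shared-randomness) functions of their own inputs only, the winning probability P(d ⊕ d' = b ∧ b') is at most 3/4. -/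
open MeasureTheory

theorem classical_chsh_bound
    {Λ : Type*} [MeasurableSpace Λ] (μ : Measure Λ) [IsProbabilityMeasure μ]
    (f g : Bool → Λ → Bool)
    (hf : ∀ b, Measurable (f b)) (hg : ∀ b', Measurable (g b')) :
    (1 / 4 : ℝ) * ∑ b : Bool, ∑ b' : Bool,
      (μ {l | xor (f b l) (g b' l) = (b && b')}).toReal ≤ 3 / 4 := by
  set A : Bool → Bool → Set Λ := fun b b' => {l | xor (f b l) (g b' l) = (b && b')} with hA
  have mA : ∀ b b', MeasurableSet (A b b') := by
    intro b b'
    have : Measurable (fun l => xor (f b l) (g b' l)) :=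
      (measurable_of_countable (fun p : Bool × Bool => xor p.1 p.2)).comp
        ((hf b).prodMk (hg b'))
    exact this (measurableSet_singleton (b && b'))
  have hinter : A false false ∩ A false true ∩ (A true false ∩ A true true) = ∅ := by
    ext l
    simp only [hA, Set.mem_inter_iff, Set.mem_setOf_eq, Set.mem_empty_iff_false, iff_false,
      not_and]
    intro h1 h2 h3
    revert h1 h2 h3
    cases f false l <;> cases f true l <;> cases g false l <;> cases g true l <;> simp
  have key : μ (A false false) + μ (A false true) + (μ (A true false) + μ (A true true)) ≤ 3 := by
    have h1 := measure_union_add_inter (μ := μ) (A false false) (mA false true)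
    have h2 := measure_union_add_inter (μ := μ) (A true false) (mA true true)
    have h3 := measure_union_add_inter (μ := μ)
      (A false false ∩ A false true) ((mA true false).inter (mA true true))
    calc μ (A false false) + μ (A false true) + (μ (A true false) + μ (A true true))
        = (μ (A false false ∪ A false true) + μ (A true false ∪ A true true))
          + (μ (A false false ∩ A false true) + μ (A true false ∩ A true true)) := by
          rw [← h1, ← h2]; ring
      _ ≤ 1 + 1 + (1 + 0) := by
          rw [hinter, measure_empty] at h3
          rw [← h3]
          gcongr <;> exact prob_le_one
      _ = 3 := by norm_num
  have hne : ∀ b b', μ (A b b') ≠ ⊤ := fun b b' => measure_ne_top μ _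
  have hsum : ∑ b : Bool, ∑ b' : Bool, (μ (A b b')).toReal
      = ((μ (A false false) + μ (A false true) + (μ (A true false) + μ (A true true))).toReal) := by
    rw [Fintype.sum_bool, Fintype.sum_bool, Fintype.sum_bool]
    rw [ENNReal.toReal_add (ENNReal.add_ne_top.2 ⟨hne _ _, hne _ _⟩)
        (ENNReal.add_ne_top.2 ⟨hne _ _, hne _ _⟩),
      ENNReal.toReal_add (hne _ _) (hne _ _), ENNReal.toReal_add (hne _ _) (hne _ _)]
    ring
  rw [hsum]
  have : (μ (A false false) + μ (A false true) + (μ (A true false) + μ (A true true))).toReal ≤ 3 := by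
    calc _ ≤ (3 : ENNReal).toReal := ENNReal.toReal_mono (by norm_num) key
      _ = 3 := by simp
  linarith
end
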